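/- arXiv:2003.06666 — 3 statements merged into one kernel-verified Lean document; each statement's English description precedes it below -/
import Mathlib

section
/- Let F be a constant 2-form on ℝ^{n,1} (n ≥ 2) whose real kernel K = {v ∈ ℝ^{n+1} : η⁻¹F v = 0} is a null subspace: η(v,v) ≥ 0 for all v ∈ K, and K contains a nonzero vector ℓ with η(ℓ,ℓ) = 0. Then there exist Λ ∈ O(n,1), an integer r ≥ 0 with 2r + 2 ≤ n, and real numbers b₁ ≥ … ≥ b_r > 0 such that Λᵀ F Λ = dx⁰dx¹ + dx¹dx² + Σ_{i=1}^r b_i · dx^{2i+1}dx^{2i+2} (the sum being empty when r = 0). -/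
open Matrix BigOperators

noncomputable section

/-- The Minkowski metric `η = diag(−1,1,…,1)` on `ℝ^{n,1}`. -/
def eta (n : ℕ) : Matrix (Fin (n+1)) (Fin (n+1)) ℝ :=
  Matrix.diagonal (fun i => if (i : ℕ) = 0 then -1 else 1)

/-- `dx^μ dx^ν`: the antisymmetric matrix with `(μ,ν)` entry `+1`,
`(ν,μ)` entry `−1`, all other entries `0`. -/
def dx (n μ ν : ℕ) : Matrix (Fin (n+1)) (Fin (n+1)) ℝ :=
  Matrix.of fun i j =>
    if (i : ℕ) = μ ∧ (j : ℕ) = ν then 1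
    else if (i : ℕ) = ν ∧ (j : ℕ) = μ then -1 else 0

/-- The operator `♯F = η⁻¹ F` as a complex matrix acting on `ℂ^{n+1}`. -/
def sharp {n : ℕ} (F : Matrix (Fin (n+1)) (Fin (n+1)) ℝ) :
    Matrix (Fin (n+1)) (Fin (n+1)) ℂ :=
  ((eta n)⁻¹ * F).map (Complex.ofReal)

/-- The bilinear form `η` extended complex-bilinearly to `ℂ^{n+1}`. -/
def etaC {n : ℕ} (v w : Fin (n+1) → ℂ) : ℂ :=
  ∑ i : Fin (n+1), (if (i : ℕ) = 0 then (-1 : ℂ) else 1) * v i * w i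

/-- The bilinear form `η` on `ℝ^{n+1}`. -/
def etaR {n : ℕ} (v w : Fin (n+1) → ℝ) : ℝ :=
  ∑ i : Fin (n+1), (if (i : ℕ) = 0 then (-1 : ℝ) else 1) * v i * w i

/-- `v` is an eigenvector of `M` with eigenvalue `lam`. -/
def IsEigenpair {n : ℕ} (M : Matrix (Fin (n+1)) (Fin (n+1)) ℂ) (lam : ℂ)
    (v : Fin (n+1) → ℂ) : Prop :=
  v ≠ 0 ∧ M.mulVec v = lam • v

/-- `lam` is an eigenvalue of the matrix `M`. -/
def HasEigenvalue' {n : ℕ} (M : Matrix (Fin (n+1)) (Fin (n+1)) ℂ) (lam : ℂ) : Prop :=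
  ∃ v, IsEigenpair M lam v

/-- `b₁ ≥ b₂ ≥ … ≥ b_r > 0`. -/
def DecreasingPos {r : ℕ} (b : Fin r → ℝ) : Prop :=
  (∀ i j : Fin r, i ≤ j → b j ≤ b i) ∧ ∀ i, 0 < b i

namespace Aux
variable {n : ℕ}

abbrev sgn (i : Fin (n+1)) : ℝ := if (i : ℕ) = 0 then (-1:ℝ) else 1

lemma sgn_sq (i : Fin (n+1)) : sgn i * sgn i = 1 := by
  unfold sgn; split <;> norm_num

lemma eta_sq : eta n * eta n = 1 := by
  rw [eta, Matrix.diagonal_mul_diagonal]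
  have h : (fun i : Fin (n+1) => (if (i:ℕ)=0 then (-1:ℝ) else 1) * (if (i:ℕ)=0 then (-1:ℝ) else 1)) = fun _ => 1 := by
    funext i; split <;> norm_num
  rw [h, Matrix.diagonal_one]

lemma eta_inv : (eta n)⁻¹ = eta n := Matrix.inv_eq_right_inv eta_sq

lemma etaR_eq (x y : Fin (n+1) → ℝ) : etaR x y = x ⬝ᵥ (eta n).mulVec y := by
  unfold etaR dotProduct
  refine Finset.sum_congr rfl fun i _ => ?_
  rw [eta, Matrix.mulVec_diagonal]; ring

lemma etaR_symm (x y : Fin (n+1) → ℝ) : etaR x y = etaR y x := by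
  unfold etaR; exact Finset.sum_congr rfl fun i _ => by ring

lemma etaR_add_left (x y z : Fin (n+1) → ℝ) : etaR (x + y) z = etaR x z + etaR y z := by
  unfold etaR; rw [← Finset.sum_add_distrib]
  exact Finset.sum_congr rfl fun i _ => by simp only [Pi.add_apply]; split <;> ring

lemma etaR_add_right (x y z : Fin (n+1) → ℝ) : etaR x (y + z) = etaR x y + etaR x z := by
  rw [etaR_symm, etaR_add_left, etaR_symm y x, etaR_symm z x]

lemma etaR_smul_left (c : ℝ) (x y : Fin (n+1) → ℝ) : etaR (c • x) y = c * etaR x y := by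
  unfold etaR; rw [Finset.mul_sum]
  exact Finset.sum_congr rfl fun i _ => by simp only [Pi.smul_apply, smul_eq_mul]; split <;> ring

lemma etaR_smul_right (c : ℝ) (x y : Fin (n+1) → ℝ) : etaR x (c • y) = c * etaR x y := by
  rw [etaR_symm, etaR_smul_left, etaR_symm y x]

lemma etaR_neg_left (x y : Fin (n+1) → ℝ) : etaR (-x) y = - etaR x y := by
  have := etaR_smul_left (-1) x y; simpa using this

lemma etaR_neg_right (x y : Fin (n+1) → ℝ) : etaR x (-y) = - etaR x y := by
  rw [etaR_symm, etaR_neg_left, etaR_symm y x]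

lemma etaR_sub_left (x y z : Fin (n+1) → ℝ) : etaR (x - y) z = etaR x z - etaR y z := by
  rw [sub_eq_add_neg, etaR_add_left, etaR_neg_left]; ring

lemma etaR_sub_right (x y z : Fin (n+1) → ℝ) : etaR x (y - z) = etaR x y - etaR x z := by
  rw [etaR_symm, etaR_sub_left, etaR_symm y x, etaR_symm z x]

lemma etaR_zero_left (y : Fin (n+1) → ℝ) : etaR 0 y = 0 := by
  simp [etaR]

lemma etaR_zero_right (x : Fin (n+1) → ℝ) : etaR x 0 = 0 := by
  simp [etaR]

/-- Nondegeneracy of η. -/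
lemma etaR_nondeg {z : Fin (n+1) → ℝ} (h : ∀ x, etaR z x = 0) : z = 0 := by
  funext i
  have := h (Pi.single i 1)
  unfold etaR at this
  rw [Finset.sum_eq_single i] at this
  · rw [Pi.single_eq_same, mul_one] at this
    by_cases h : (i:ℕ) = 0 <;> simp [h] at this <;> [exact this; exact this]
  · intro b _ hb; simp [Pi.single_eq_of_ne hb]
  · intro hi; exact absurd (Finset.mem_univ i) hi

/-- η-representation of linear functionals + separation. -/
lemma sep (U : Submodule ℝ (Fin (n+1) → ℝ)) {x : Fin (n+1) → ℝ} (hx : x ∉ U) :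
    ∃ z, (∀ u ∈ U, etaR z u = 0) ∧ etaR z x ≠ 0 := by
  obtain ⟨f, hfx, hfU⟩ := U.exists_dual_map_eq_bot_of_notMem hx inferInstance
  set z : Fin (n+1) → ℝ := fun i => sgn i * f (Pi.single i 1) with hz
  have hrep : ∀ u, etaR z u = f u := by
    intro u
    have hu : u = ∑ i, u i • (Pi.single i 1 : Fin (n+1) → ℝ) := by
      funext j; simp [Finset.sum_apply, Pi.smul_apply]
      rw [Finset.sum_eq_single j]
      · simp
      · intro b _ hb; simp [Pi.single_eq_of_ne (Ne.symm hb)]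
      · intro hj; exact absurd (Finset.mem_univ j) hj
    conv_rhs => rw [hu]
    rw [map_sum]
    unfold etaR
    refine Finset.sum_congr rfl fun i _ => ?_
    rw [_root_.map_smul, hz]
    simp only [smul_eq_mul]
    have : sgn (n := n) i * sgn i = 1 := sgn_sq i
    calc sgn i * (sgn i * f (Pi.single i 1)) * u i
        = (sgn i * sgn i) * f (Pi.single i 1) * u i := by ring
      _ = u i * f (Pi.single i 1) := by rw [this]; ring
  refine ⟨z, fun u hu => ?_, ?_⟩
  · rw [hrep]
    have : f u ∈ Submodule.map f U := Submodule.mem_map_of_mem hu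
    rw [hfU] at this
    exact Submodule.mem_bot ℝ |>.mp this
  · rw [hrep]; exact hfx


lemma eta_transpose : (eta n)ᵀ = eta n := Matrix.diagonal_transpose _

lemma dot_shift (M : Matrix (Fin (n+1)) (Fin (n+1)) ℝ) (x y : Fin (n+1) → ℝ) :
    (M *ᵥ x) ⬝ᵥ y = x ⬝ᵥ (Mᵀ *ᵥ y) := by
  rw [Matrix.dotProduct_mulVec, Matrix.vecMul_transpose]

variable {F : Matrix (Fin (n+1)) (Fin (n+1)) ℝ}

lemma skewA (hF : Fᵀ = -F) (x y : Fin (n+1) → ℝ) :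
    etaR ((eta n * F) *ᵥ x) y = - etaR x ((eta n * F) *ᵥ y) := by
  have h1 : ((eta n * F)ᵀ) * (eta n) = -F := by
    rw [Matrix.transpose_mul, eta_transpose, hF, Matrix.neg_mul, Matrix.neg_mul,
      Matrix.mul_assoc, eta_sq, Matrix.mul_one]
  have h2 : eta n * (eta n * F) = F := by
    rw [← Matrix.mul_assoc, eta_sq, Matrix.one_mul]
  rw [etaR_eq, etaR_eq, dot_shift, Matrix.mulVec_mulVec, h1, Matrix.mulVec_mulVec, h2,
    Matrix.neg_mulVec, dotProduct_neg]

lemma skew_self (hF : Fᵀ = -F) (x : Fin (n+1) → ℝ) :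
    etaR ((eta n * F) *ᵥ x) x = 0 := by
  have h := skewA hF x x
  have h2 : etaR x ((eta n * F) *ᵥ x) = etaR ((eta n * F) *ᵥ x) x := etaR_symm _ _
  rw [h2] at h; linarith

lemma null_sq {z : Fin (n+1) → ℝ} (h0 : z 0 = 0) : etaR z z = ∑ i, (z i)^2 := by
  unfold etaR
  refine Finset.sum_congr rfl fun i _ => ?_
  by_cases h : (i : ℕ) = 0
  · have : i = 0 := Fin.ext h
    rw [this, h0]; simp
  · simp [h]; ring

lemma null_head {l : Fin (n+1) → ℝ} (hl0 : l ≠ 0) (hll : etaR l l = 0) : l 0 ≠ 0 := by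
  intro h0
  apply hl0
  have h := null_sq h0
  rw [hll] at h
  have h2 := Finset.sum_eq_zero_iff_of_nonneg (fun i _ => sq_nonneg (l i)) |>.mp h.symm
  funext i
  have := h2 i (Finset.mem_univ i)
  exact pow_eq_zero_iff (two_ne_zero) |>.mp this

lemma null_perp_nonneg {l : Fin (n+1) → ℝ} (hl0 : l ≠ 0) (hll : etaR l l = 0)
    {x : Fin (n+1) → ℝ} (hxl : etaR x l = 0) : 0 ≤ etaR x x := by
  have hh := null_head hl0 hll
  set c := x 0 / l 0 with hc
  set z := x - c • l with hzdef
  have hz0 : z 0 = 0 := by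
    simp only [hzdef, Pi.sub_apply, Pi.smul_apply, smul_eq_mul, hc]
    field_simp
    ring
  have hzz : etaR z z = etaR x x := by
    rw [hzdef, etaR_sub_left, etaR_sub_right, etaR_sub_right, etaR_smul_left,
      etaR_smul_right, etaR_smul_left, etaR_smul_right, hll, etaR_symm l x, hxl]
    ring
  rw [← hzz, null_sq hz0]
  exact Finset.sum_nonneg fun i _ => sq_nonneg _

lemma null_perp_null {l : Fin (n+1) → ℝ} (hl0 : l ≠ 0) (hll : etaR l l = 0)
    {x : Fin (n+1) → ℝ} (hxl : etaR x l = 0) (hxx : etaR x x = 0) : ∃ c : ℝ, x = c • l := by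
  have hh := null_head hl0 hll
  set c := x 0 / l 0 with hc
  set z := x - c • l with hzdef
  have hz0 : z 0 = 0 := by
    simp only [hzdef, Pi.sub_apply, Pi.smul_apply, smul_eq_mul, hc]
    field_simp
    ring
  have hzz : etaR z z = etaR x x := by
    rw [hzdef, etaR_sub_left, etaR_sub_right, etaR_sub_right, etaR_smul_left,
      etaR_smul_right, etaR_smul_left, etaR_smul_right, hll, etaR_symm l x, hxl]
    ring
  refine ⟨c, ?_⟩
  have hz : z = 0 := by
    have h := null_sq hz0
    rw [hzz, hxx] at h
    have h2 := Finset.sum_eq_zero_iff_of_nonneg (fun i _ => sq_nonneg (z i)) |>.mp h.symm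
    funext i
    have := h2 i (Finset.mem_univ i)
    exact pow_eq_zero_iff (two_ne_zero) |>.mp this
  have := sub_eq_zero.mp (hzdef ▸ hz)
  exact this

lemma chain (hF : Fᵀ = -F)
    (hpsd : ∀ v, (eta n * F) *ᵥ v = 0 → 0 ≤ etaR v v)
    (l : Fin (n+1) → ℝ) (hl : (eta n * F) *ᵥ l = 0) (hl0 : l ≠ 0) (hll : etaR l l = 0) :
    ∃ L W U : Fin (n+1) → ℝ,
      (eta n * F) *ᵥ L = 0 ∧ (eta n * F) *ᵥ W = L ∧ (eta n * F) *ᵥ U = W ∧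
      etaR L L = 0 ∧ etaR W W = 1 ∧ etaR U U = 0 ∧
      etaR L W = 0 ∧ etaR U W = 0 ∧ etaR U L = -1 ∧
      (∀ x, etaR x L = 0 → 0 ≤ etaR x x) ∧
      (∀ x, etaR x L = 0 → etaR x x = 0 → ∃ c : ℝ, x = c • L) := by
  set A := eta n * F with hA
  -- kernel vectors are η-orthogonal to l
  have hKl : ∀ z, A *ᵥ z = 0 → etaR z l = 0 := by
    intro z hz
    by_contra hzl
    have key : ∀ t : ℝ, 0 ≤ etaR z z + 2*t*(etaR z l) := by
      intro t
      have hmem : A *ᵥ (z + t • l) = 0 := by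
        rw [Matrix.mulVec_add, Matrix.mulVec_smul, hz, hl]; simp
      have h := hpsd _ hmem
      have hexp : etaR (z + t • l) (z + t • l) = etaR z z + 2*t*(etaR z l) := by
        rw [etaR_add_left, etaR_add_right, etaR_add_right, etaR_smul_left,
          etaR_smul_right, etaR_smul_left, etaR_smul_right, hll, etaR_symm l z]
        ring
      linarith [hexp ▸ h]
    have h := key (-(etaR z z + 1)/(2*etaR z l))
    have h2 : 2 * (-(etaR z z + 1)/(2*etaR z l)) * etaR z l = -(etaR z z + 1) := by
      field_simp
    rw [h2] at h
    linarith
  -- l is in the range of A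
  have hlr : l ∈ LinearMap.range (Matrix.mulVecLin A) := by
    by_contra h
    obtain ⟨z, hzU, hzl⟩ := sep _ h
    have hz : A *ᵥ z = 0 := by
      apply etaR_nondeg
      intro x
      rw [skewA hF]
      have : etaR z (A *ᵥ x) = 0 :=
        hzU _ (LinearMap.mem_range.mpr ⟨x, Matrix.mulVecLin_apply _ _⟩)
      rw [this]; ring
    exact hzl (hKl z hz)
  obtain ⟨w0, hw0⟩ := hlr
  rw [Matrix.mulVecLin_apply] at hw0
  -- w0 is in range + kernel
  have hw0m : w0 ∈ LinearMap.range (Matrix.mulVecLin A) ⊔ LinearMap.ker (Matrix.mulVecLin A) := by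
    by_contra h
    obtain ⟨z, hzU, hzw⟩ := sep _ h
    have hz : A *ᵥ z = 0 := by
      apply etaR_nondeg
      intro x
      rw [skewA hF]
      have : etaR z (A *ᵥ x) = 0 := by
        apply hzU
        exact Submodule.mem_sup_left (LinearMap.mem_range.mpr ⟨x, Matrix.mulVecLin_apply _ _⟩)
      rw [this]; ring
    have hzz : etaR z z = 0 := by
      apply hzU
      exact Submodule.mem_sup_right (by rwa [LinearMap.mem_ker, Matrix.mulVecLin_apply])
    obtain ⟨c, hc⟩ := null_perp_null hl0 hll (hKl z hz) hzz
    apply hzw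
    rw [hc, etaR_smul_left]
    have : etaR l w0 = 0 := by
      rw [← hw0]; exact skew_self hF w0
    rw [this]; ring
  obtain ⟨w1, hw1, k, hk, hwk⟩ := Submodule.mem_sup.mp hw0m
  rw [LinearMap.mem_ker, Matrix.mulVecLin_apply] at hk
  obtain ⟨u0, hu0⟩ := hw1
  rw [Matrix.mulVecLin_apply] at hu0
  -- w := w1 satisfies A w = l and w = A u0
  have hw : A *ᵥ w1 = l := by
    have : A *ᵥ w0 = A *ᵥ w1 + A *ᵥ k := by rw [← Matrix.mulVec_add, hwk]
    rw [hw0, hk, add_zero] at this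
    exact this.symm
  -- basic products
  have hlw : etaR l w1 = 0 := by rw [← hw]; exact skew_self hF w1
  have hwl : etaR w1 l = 0 := by rw [etaR_symm]; exact hlw
  have hww_nonneg : 0 ≤ etaR w1 w1 := null_perp_nonneg hl0 hll hwl
  have hww_pos : 0 < etaR w1 w1 := by
    rcases lt_or_eq_of_le hww_nonneg with h | h
    · exact h
    · exfalso
      obtain ⟨c, hc⟩ := null_perp_null hl0 hll hwl h.symm
      have : l = 0 := by
        rw [← hw, hc, Matrix.mulVec_smul, hl]; simp
      exact hl0 this
  have huw : etaR u0 w1 = 0 := by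
    rw [← hu0]
    have h := skewA hF u0 u0
    have h2 : etaR (A *ᵥ u0) u0 = etaR u0 (A *ᵥ u0) := etaR_symm _ _
    rw [h2] at h
    linarith
  have hul : etaR u0 l = -(etaR w1 w1) := by
    rw [← hw]
    have h := skewA hF u0 w1
    rw [hu0] at h
    linarith
  have hulne : etaR u0 l ≠ 0 := by rw [hul]; exact neg_ne_zero.mpr (ne_of_gt hww_pos)
  -- adjust u to be null
  set t : ℝ := - etaR u0 u0 / (2 * etaR u0 l) with ht
  set u1 := u0 + t • l with hu1def
  have hu1 : A *ᵥ u1 = w1 := by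
    rw [hu1def, Matrix.mulVec_add, Matrix.mulVec_smul, hu0, hl]; simp
  have hu1u1 : etaR u1 u1 = 0 := by
    rw [hu1def, etaR_add_left, etaR_add_right, etaR_add_right, etaR_smul_left,
      etaR_smul_right, etaR_smul_left, etaR_smul_right, hll, etaR_symm l u0, ht]
    field_simp
    ring
  have hu1w : etaR u1 w1 = 0 := by
    rw [hu1def, etaR_add_left, etaR_smul_left, huw, hlw]; ring
  have hu1l : etaR u1 l = etaR u0 l := by
    rw [hu1def, etaR_add_left, etaR_smul_left, hll]; ring
  -- normalize
  set a := etaR w1 w1 with ha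
  set s := Real.sqrt a with hs
  have hs0 : 0 < s := Real.sqrt_pos.mpr hww_pos
  have hss : s * s = a := Real.mul_self_sqrt hww_pos.le
  have hsne : s ≠ 0 := ne_of_gt hs0
  refine ⟨s⁻¹ • l, s⁻¹ • w1, s⁻¹ • u1, ?_, ?_, ?_, ?_, ?_, ?_, ?_, ?_, ?_, ?_, ?_⟩
  · rw [Matrix.mulVec_smul, hl]; simp
  · rw [Matrix.mulVec_smul, hw]
  · rw [Matrix.mulVec_smul, hu1]
  · rw [etaR_smul_left, etaR_smul_right, hll]; ring
  · rw [etaR_smul_left, etaR_smul_right, ← ha]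
    field_simp
    nlinarith [hss]
  · rw [etaR_smul_left, etaR_smul_right, hu1u1]; ring
  · rw [etaR_smul_left, etaR_smul_right, hlw]; ring
  · rw [etaR_smul_left, etaR_smul_right, hu1w]; ring
  · rw [etaR_smul_left, etaR_smul_right, hu1l, hul]
    field_simp
    nlinarith [hss]
  · intro x hx
    rw [etaR_smul_right] at hx
    have hx' : etaR x l = 0 := by
      rcases mul_eq_zero.mp hx with h | h
      · exact absurd h (inv_ne_zero hsne)
      · exact h
    exact null_perp_nonneg hl0 hll hx'
  · intro x hx hxx
    rw [etaR_smul_right] at hx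
    have hx' : etaR x l = 0 := by
      rcases mul_eq_zero.mp hx with h | h
      · exact absurd h (inv_ne_zero hsne)
      · exact h
    obtain ⟨c, hc⟩ := null_perp_null hl0 hll hx' hxx
    exact ⟨c * s, by rw [hc, smul_smul]; congr 1; field_simp⟩

lemma quad_coeff_zero {a b : ℝ} (h : ∀ t : ℝ, 0 ≤ a*t^2 + b*t) : b = 0 := by
  by_contra hb
  set u : ℝ := |a| + 1 with hu
  have hu0 : (0:ℝ) < u := by positivity
  have h1 := h (-b/u)
  have h2 : a*(-b/u)^2 + b*(-b/u) = (b^2 * (a - u))/u^2 := by field_simp; ring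
  rw [h2] at h1
  have h3 : (b^2 * (a - u))/u^2 < 0 := by
    apply div_neg_of_neg_of_pos
    · have : a - u < 0 := by have := le_abs_self a; simp only [hu]; linarith
      have hb2 : 0 < b^2 := by positivity
      nlinarith
    · positivity
  linarith

lemma etaR_cont {X : Type*} [TopologicalSpace X] {f g : X → (Fin (n+1) → ℝ)}
    (hf : Continuous f) (hg : Continuous g) : Continuous fun x => etaR (f x) (g x) := by
  unfold etaR
  apply continuous_finset_sum
  intro i _
  exact (continuous_const.mul ((continuous_apply i).comp hf)).mul ((continuous_apply i).comp hg)

lemma cont_mulVec (M : Matrix (Fin (n+1)) (Fin (n+1)) ℝ) :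
    Continuous fun x : Fin (n+1) → ℝ => M *ᵥ x := by
  apply continuous_pi
  intro i
  show Continuous fun x => (M *ᵥ x) i
  simp only [Matrix.mulVec, dotProduct]
  apply continuous_finset_sum
  intro j _
  exact continuous_const.mul (continuous_apply j)

/-- `φ_p x = etaR x p` as a linear map. -/
def phi (p : Fin (n+1) → ℝ) : (Fin (n+1) → ℝ) →ₗ[ℝ] ℝ where
  toFun x := etaR x p
  map_add' x y := etaR_add_left x y p
  map_smul' c x := by simp [etaR_smul_left c x p]

@[simp] lemma phi_apply (p x : Fin (n+1) → ℝ) : phi p x = etaR x p := rfl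

set_option synthInstance.maxHeartbeats 400000 in
lemma finrank_inf_ker (V : Submodule ℝ (Fin (n+1) → ℝ)) (φ : (Fin (n+1) → ℝ) →ₗ[ℝ] ℝ)
    {p : Fin (n+1) → ℝ} (hp : p ∈ V) (hφp : φ p ≠ 0) :
    Module.finrank ℝ ↥(V ⊓ LinearMap.ker φ) + 1 = Module.finrank ℝ ↥V := by
  set ψ := φ.comp V.subtype with hψ
  have hrange : LinearMap.range ψ = ⊤ := by
    rw [LinearMap.range_eq_top]
    intro c
    refine ⟨(c / φ p) • ⟨p, hp⟩, ?_⟩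
    simp only [hψ, LinearMap.comp_apply, _root_.map_smul, Submodule.coe_smul, Submodule.subtype_apply,
      smul_eq_mul]
    field_simp
  have hrn := LinearMap.finrank_range_add_finrank_ker ψ
  rw [hrange, finrank_top, Module.finrank_self] at hrn
  have hcomap : Submodule.comap V.subtype (V ⊓ LinearMap.ker φ) = LinearMap.ker ψ := by
    rw [Submodule.comap_inf, Submodule.comap_subtype_self, ← LinearMap.ker_comp, ← hψ]
    exact top_inf_eq _
  have e := Submodule.comapSubtypeEquivOfLe (inf_le_left (a := V) (b := LinearMap.ker φ))
  have hfr : Module.finrank ℝ ↥(V ⊓ LinearMap.ker φ) = Module.finrank ℝ (LinearMap.ker ψ) := by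
    rw [← hcomap]
    exact (LinearEquiv.finrank_eq e).symm
  omega

lemma inv_sqrt_sq {q : ℝ} (hq : 0 < q) : (Real.sqrt q)⁻¹ * ((Real.sqrt q)⁻¹ * q) = 1 := by
  have hsq := Real.mul_self_sqrt hq.le
  have hsne : Real.sqrt q ≠ 0 := ne_of_gt (Real.sqrt_pos.mpr hq)
  have h2 : (Real.sqrt q)⁻¹ * Real.sqrt q = 1 := inv_mul_cancel₀ hsne
  calc (Real.sqrt q)⁻¹ * ((Real.sqrt q)⁻¹ * q)
      = (Real.sqrt q)⁻¹ * (Real.sqrt q)⁻¹ * (Real.sqrt q * Real.sqrt q) := by rw [hsq]; ring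
    _ = ((Real.sqrt q)⁻¹ * Real.sqrt q) * ((Real.sqrt q)⁻¹ * Real.sqrt q) := by ring
    _ = 1 := by rw [h2]; ring

lemma posdef_bound (V : Submodule ℝ (Fin (n+1) → ℝ))
    (hpos : ∀ x, x ∈ V → x ≠ 0 → 0 < etaR x x) :
    ∃ c : ℝ, 0 < c ∧ ∀ x, x ∈ V → c * ‖x‖^2 ≤ etaR x x := by
  by_cases hV : ∀ x, x ∈ V → x = (0 : Fin (n+1) → ℝ)
  · exact ⟨1, one_pos, fun x hx => by rw [hV x hx]; simp [etaR_zero_left]⟩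
  push_neg at hV
  obtain ⟨x₀, hx₀V, hx₀⟩ := hV
  set S : Set (Fin (n+1) → ℝ) := {x | x ∈ V ∧ ‖x‖ = 1} with hS
  have hSclosed : IsClosed S := by
    apply IsClosed.inter (Submodule.closed_of_finiteDimensional V)
    exact isClosed_eq continuous_norm continuous_const
  have hSbdd : Bornology.IsBounded S := by
    apply (Metric.isBounded_closedBall (x := (0 : Fin (n+1) → ℝ)) (r := 1)).subset
    intro x hx
    simp only [Metric.mem_closedBall, dist_zero_right]
    exact le_of_eq hx.2
  have hScompact : IsCompact S := Metric.isCompact_of_isClosed_isBounded hSclosed hSbdd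
  have hSne : S.Nonempty := by
    refine ⟨‖x₀‖⁻¹ • x₀, Submodule.smul_mem V _ hx₀V, ?_⟩
    rw [norm_smul, norm_inv, norm_norm]
    exact inv_mul_cancel₀ (norm_ne_zero_iff.mpr hx₀)
  obtain ⟨y, hyS, hymin⟩ := hScompact.exists_isMinOn hSne
    ((etaR_cont continuous_id continuous_id).continuousOn)
  set c := etaR y y with hc
  have hy0 : y ≠ 0 := by
    intro h
    have h2 := hyS.2
    rw [h, norm_zero] at h2
    exact one_ne_zero h2.symm
  have hcpos : 0 < c := hpos y hyS.1 hy0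
  refine ⟨c, hcpos, fun x hxV => ?_⟩
  by_cases hx0 : x = 0
  · rw [hx0, etaR_zero_left, norm_zero]; norm_num
  have hnx : (0:ℝ) < ‖x‖ := norm_pos_iff.mpr hx0
  set ux := ‖x‖⁻¹ • x with hux
  have huxS : ux ∈ S := by
    refine ⟨Submodule.smul_mem V _ hxV, ?_⟩
    rw [norm_smul, norm_inv, norm_norm]
    exact inv_mul_cancel₀ (ne_of_gt hnx)
  have h1 : c ≤ etaR ux ux := hymin huxS
  rw [hux, etaR_smul_left, etaR_smul_right] at h1
  have h2 : c ≤ ‖x‖⁻¹ * (‖x‖⁻¹ * etaR x x) := h1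
  calc c * ‖x‖^2 ≤ (‖x‖⁻¹ * (‖x‖⁻¹ * etaR x x)) * ‖x‖^2 := by
        apply mul_le_mul_of_nonneg_right h2 (sq_nonneg _)
    _ = (‖x‖⁻¹*‖x‖) * (‖x‖⁻¹*‖x‖) * etaR x x := by ring
    _ = etaR x x := by rw [inv_mul_cancel₀ (ne_of_gt hnx)]; ring

lemma rayleigh (hF : Fᵀ = -F) (V : Submodule ℝ (Fin (n+1) → ℝ))
    (hinv : ∀ x ∈ V, (eta n * F) *ᵥ x ∈ V)
    (hpos : ∀ x, x ∈ V → x ≠ 0 → 0 < etaR x x)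
    (x₁ : Fin (n+1) → ℝ) (hx₁ : x₁ ∈ V) (hAx₁ : (eta n * F) *ᵥ x₁ ≠ 0) :
    ∃ (p : Fin (n+1) → ℝ) (β : ℝ), p ∈ V ∧ 0 < β ∧ etaR p p = 1 ∧
      (eta n * F) *ᵥ ((eta n * F) *ᵥ p) = (-β) • p ∧
      etaR ((eta n * F) *ᵥ p) ((eta n * F) *ᵥ p) = β ∧
      (∀ y ∈ V, etaR ((eta n * F) *ᵥ y) ((eta n * F) *ᵥ y) ≤ β * etaR y y) := by
  set A := eta n * F with hA
  obtain ⟨c, hc, hcb⟩ := posdef_bound V hpos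
  set S : Set (Fin (n+1) → ℝ) := {x | x ∈ V ∧ etaR x x = 1} with hS
  have hSclosed : IsClosed S := by
    apply IsClosed.inter (Submodule.closed_of_finiteDimensional V)
    exact isClosed_eq (etaR_cont continuous_id continuous_id) continuous_const
  have hSbdd : Bornology.IsBounded S := by
    apply (Metric.isBounded_closedBall (x := (0 : Fin (n+1) → ℝ))
      (r := Real.sqrt c⁻¹)).subset
    intro x hx
    simp only [Metric.mem_closedBall, dist_zero_right]
    have h1 : c * ‖x‖^2 ≤ 1 := by rw [← hx.2]; exact hcb x hx.1
    have hcc : c * c⁻¹ = 1 := mul_inv_cancel₀ (ne_of_gt hc)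
    have hcinv : (0:ℝ) ≤ c⁻¹ := inv_nonneg.mpr hc.le
    have h2 : ‖x‖^2 ≤ c⁻¹ := by nlinarith
    rw [← Real.sqrt_sq (norm_nonneg x)]
    exact Real.sqrt_le_sqrt h2
  have hScompact : IsCompact S := Metric.isCompact_of_isClosed_isBounded hSclosed hSbdd
  have hx₁0 : x₁ ≠ 0 := by
    intro h; apply hAx₁; rw [h, Matrix.mulVec_zero]
  have hq1 : 0 < etaR x₁ x₁ := hpos x₁ hx₁ hx₁0
  have hSne : S.Nonempty := by
    set r₁ := (Real.sqrt (etaR x₁ x₁))⁻¹ with hr₁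
    have hsq : Real.sqrt (etaR x₁ x₁) * Real.sqrt (etaR x₁ x₁) = etaR x₁ x₁ :=
      Real.mul_self_sqrt hq1.le
    have hsne : Real.sqrt (etaR x₁ x₁) ≠ 0 := by
      intro h; rw [h] at hsq; simp at hsq; linarith
    refine ⟨r₁ • x₁, Submodule.smul_mem V _ hx₁, ?_⟩
    rw [etaR_smul_left, etaR_smul_right, hr₁]
    exact inv_sqrt_sq hq1
  obtain ⟨p, hpS, hpmax⟩ := hScompact.exists_isMaxOn hSne
    ((etaR_cont (cont_mulVec A) (cont_mulVec A)).continuousOn)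
  set β := etaR (A *ᵥ p) (A *ᵥ p) with hβ
  have hpV : p ∈ V := hpS.1
  have hpp : etaR p p = 1 := hpS.2
  -- Rayleigh bound
  have hbound : ∀ y ∈ V, etaR (A *ᵥ y) (A *ᵥ y) ≤ β * etaR y y := by
    intro y hyV
    by_cases hy0 : y = 0
    · rw [hy0, Matrix.mulVec_zero, etaR_zero_left]; simp
    have hq : 0 < etaR y y := hpos y hyV hy0
    set ry := (Real.sqrt (etaR y y))⁻¹ with hry
    have hsq : Real.sqrt (etaR y y) * Real.sqrt (etaR y y) = etaR y y :=
      Real.mul_self_sqrt hq.le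
    have hsne : Real.sqrt (etaR y y) ≠ 0 := by
      intro h; rw [h] at hsq; simp at hsq; linarith
    have hyS : ry • y ∈ S := by
      refine ⟨Submodule.smul_mem V _ hyV, ?_⟩
      rw [etaR_smul_left, etaR_smul_right, hry]
      exact inv_sqrt_sq hq
    have h := hpmax hyS
    simp only [Set.mem_setOf_eq] at h
    rw [Matrix.mulVec_smul, etaR_smul_left, etaR_smul_right] at h
    -- h : ry * (ry * etaR (A y) (A y)) ≤ β
    have hry2 : ry * ry * etaR y y = 1 := by
      rw [hry]; linear_combination inv_sqrt_sq hq
    have h3 := mul_le_mul_of_nonneg_right h hq.le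
    have h4 : ry * (ry * etaR (A *ᵥ y) (A *ᵥ y)) * etaR y y
        = (ry*ry*etaR y y) * etaR (A *ᵥ y) (A *ᵥ y) := by ring
    rw [h4, hry2, one_mul] at h3
    rw [hβ]
    linarith [h3]
  -- β is positive
  have hβpos : 0 < β := by
    have h1 : 0 < etaR (A *ᵥ x₁) (A *ᵥ x₁) := hpos _ (hinv x₁ hx₁) hAx₁
    have h2 := hbound x₁ hx₁
    nlinarith
  -- eigenvector equation
  have heig : A *ᵥ (A *ᵥ p) = (-β) • p := by
    have hkey : ∀ y ∈ V, etaR (A *ᵥ p) (A *ᵥ y) = β * etaR p y := by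
      intro y hyV
      have hexp : ∀ t : ℝ, etaR (p + t•y) (p + t•y)
          = 1 + 2*t*etaR p y + t^2 * etaR y y := by
        intro t
        simp only [etaR_add_left, etaR_add_right, etaR_smul_left, etaR_smul_right]
        rw [hpp, etaR_symm y p]
        ring
      have hexp2 : ∀ t : ℝ, etaR (A *ᵥ (p + t•y)) (A *ᵥ (p + t•y))
          = etaR (A *ᵥ p) (A *ᵥ p) + 2*t*etaR (A *ᵥ p) (A *ᵥ y)
            + t^2 * etaR (A *ᵥ y) (A *ᵥ y) := by
        intro t
        simp only [Matrix.mulVec_add, Matrix.mulVec_smul, etaR_add_left, etaR_add_right,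
          etaR_smul_left, etaR_smul_right]
        rw [etaR_symm (A *ᵥ y) (A *ᵥ p)]
        ring
      have hquad : ∀ t : ℝ, 0 ≤ (β * etaR y y - etaR (A *ᵥ y) (A *ᵥ y)) * t^2
          + (2*(β * etaR p y - etaR (A *ᵥ p) (A *ᵥ y))) * t := by
        intro t
        have hmem : p + t • y ∈ V := Submodule.add_mem V hpV (Submodule.smul_mem V _ hyV)
        have h := hbound _ hmem
        rw [hexp t, hexp2 t, ← hβ] at h
        nlinarith [h]
      have := quad_coeff_zero hquad
      linarith
    have hz : ∀ y ∈ V, etaR (A *ᵥ (A *ᵥ p) + β • p) y = 0 := by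
      intro y hyV
      rw [etaR_add_left, etaR_smul_left]
      have h1 := skewA hF (A *ᵥ p) y
      rw [hA] at *
      rw [h1, hkey y hyV]
      ring
    set z := A *ᵥ (A *ᵥ p) + β • p with hzd
    have hzV : z ∈ V := Submodule.add_mem V (hinv _ (hinv p hpV)) (Submodule.smul_mem V _ hpV)
    have hzz : etaR z z = 0 := hz z hzV
    have hz0 : z = 0 := by
      by_contra h
      exact absurd hzz (ne_of_gt (hpos z hzV h))
    have h5 : A *ᵥ (A *ᵥ p) + β • p = 0 := by rw [← hzd]; exact hz0
    have h6 : A *ᵥ (A *ᵥ p) = -(β • p) := eq_neg_of_add_eq_zero_left h5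
    rw [h6, neg_smul]
  exact ⟨p, β, hpV, hβpos, hpp, heig, rfl, hbound⟩

lemma euc (hF : Fᵀ = -F) :
    ∀ m : ℕ, ∀ V : Submodule ℝ (Fin (n+1) → ℝ),
    Module.finrank ℝ ↥V = m →
    (∀ x ∈ V, (eta n * F) *ᵥ x ∈ V) →
    (∀ x, x ∈ V → x ≠ 0 → 0 < etaR x x) →
    ∃ (r : ℕ) (b : ℕ → ℝ) (g : ℕ → (Fin (n+1) → ℝ)),
      2*r ≤ m ∧
      (∀ i j, i ≤ j → j < r → b j ≤ b i) ∧
      (∀ i, i < r → 0 < b i) ∧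
      (∀ k, k < m → g k ∈ V) ∧
      (∀ k l, k < m → l < m → etaR (g k) (g l) = if k = l then 1 else 0) ∧
      (∀ i, i < r → (eta n * F) *ᵥ g (2*i) = (-(b i)) • g (2*i+1)) ∧
      (∀ i, i < r → (eta n * F) *ᵥ g (2*i+1) = (b i) • g (2*i)) ∧
      (∀ k, 2*r ≤ k → k < m → (eta n * F) *ᵥ g k = 0) := by
  intro m
  induction m using Nat.strong_induction_on with
  | _ m IH =>
  intro V hfr hinv hpos
  rcases Nat.eq_zero_or_pos m with hm0 | hmpos
  · subst hm0
    refine ⟨0, fun _ => 0, fun _ => 0, by omega, ?_, ?_, ?_, ?_, ?_, ?_, ?_⟩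
    · intro i j _ hj; omega
    · intro i hi; omega
    · intro k hk; omega
    · intro k l hk; omega
    · intro i hi; omega
    · intro i hi; omega
    · intro k _ hk; omega
  have hVne : ∃ x₀, x₀ ∈ V ∧ x₀ ≠ 0 := by
    by_contra h
    push_neg at h
    have hbot : V = ⊥ := by
      rw [Submodule.eq_bot_iff]; exact h
    rw [hbot, finrank_bot] at hfr; omega
  obtain ⟨x₀, hx₀V, hx₀⟩ := hVne
  by_cases hAzero : ∀ x ∈ V, (eta n * F) *ᵥ x = 0
  · -- A vanishes on V : split off one unit vector
    have hq0 : 0 < etaR x₀ x₀ := hpos x₀ hx₀V hx₀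
    set p := (Real.sqrt (etaR x₀ x₀))⁻¹ • x₀ with hp
    have hpV : p ∈ V := Submodule.smul_mem V _ hx₀V
    have hpp : etaR p p = 1 := by
      rw [hp, etaR_smul_left, etaR_smul_right]; exact inv_sqrt_sq hq0
    set V' := V ⊓ LinearMap.ker (phi p) with hV'
    have hfr' : Module.finrank ℝ ↥V' + 1 = m := by
      rw [← hfr]
      exact finrank_inf_ker V (phi p) hpV (by rw [phi_apply, hpp]; norm_num)
    have hinv' : ∀ x ∈ V', (eta n * F) *ᵥ x ∈ V' := by
      intro x hx
      have hxV : x ∈ V := (Submodule.mem_inf.mp hx).1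
      rw [hAzero x hxV]
      exact Submodule.zero_mem V'
    have hpos' : ∀ x, x ∈ V' → x ≠ 0 → 0 < etaR x x := by
      intro x hx hx0
      exact hpos x (Submodule.mem_inf.mp hx).1 hx0
    obtain ⟨r', b', g', hr2', hsort', hbpos', hmem', horth', hrel1', hrel2', hz'⟩ :=
      IH (m-1) (by omega) V' (by omega) hinv' hpos'
    set g : ℕ → (Fin (n+1) → ℝ) := fun k => if k = 0 then p else g' (k-1) with hgdef
    have hg0 : g 0 = p := by simp [hgdef]
    have hgs : ∀ k, k ≠ 0 → g k = g' (k-1) := fun k hk => by simp [hgdef, hk]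
    have hgmem : ∀ k, k < m → g k ∈ V := by
      intro k hk
      by_cases hk0 : k = 0
      · rw [hk0, hg0]; exact hpV
      · rw [hgs k hk0]
        exact (Submodule.mem_inf.mp (hmem' (k-1) (by omega))).1
    have hperp : ∀ j, j ≠ 0 → j < m → etaR (g j) p = 0 := by
      intro j hj0 hj
      rw [hgs j hj0]
      have hm1 := (Submodule.mem_inf.mp (hmem' (j-1) (by omega))).2
      have := LinearMap.mem_ker.mp hm1
      rwa [phi_apply] at this
    refine ⟨0, b', g, by omega, ?_, ?_, hgmem, ?_, ?_, ?_, ?_⟩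
    · intro i j _ hj; omega
    · intro i hi; omega
    · intro k l hk hl
      by_cases hk0 : k = 0 <;> by_cases hl0 : l = 0
      · rw [hk0, hl0, hg0, hpp, if_pos rfl]
      · rw [hk0, hg0, etaR_symm, hperp l hl0 hl, if_neg (by omega : ¬(0:ℕ) = l)]
      · rw [hl0, hg0, hperp k hk0 hk, if_neg (by omega : ¬k = 0)]
      · rw [hgs k hk0, hgs l hl0, horth' (k-1) (l-1) (by omega) (by omega)]
        by_cases hkl : k = l
        · rw [if_pos (by omega : k - 1 = l - 1), if_pos hkl]
        · rw [if_neg (by omega : ¬k - 1 = l - 1), if_neg hkl]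
    · intro i hi; omega
    · intro i hi; omega
    · intro k _ hk
      exact hAzero _ (hgmem k hk)
  · -- A does not vanish on V : split off a rotation plane
    push_neg at hAzero
    obtain ⟨x₁, hx₁V, hAx₁⟩ := hAzero
    obtain ⟨p, β, hpV, hβpos, hpp, heig, hApAp, hbound⟩ :=
      rayleigh hF V hinv hpos x₁ hx₁V hAx₁
    set A := eta n * F with hA
    set b0 := Real.sqrt β with hb0d
    have hb0 : 0 < b0 := Real.sqrt_pos.mpr hβpos
    have hb0sq : b0 * b0 = β := Real.mul_self_sqrt hβpos.le
    set qv := (-(b0)⁻¹) • (A *ᵥ p) with hqv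
    have hqV : qv ∈ V := Submodule.smul_mem V _ (hinv p hpV)
    have hAq : A *ᵥ qv = b0 • p := by
      rw [hqv, Matrix.mulVec_smul, heig, smul_smul]
      congr 1
      field_simp
      linarith [hb0sq]
    have hqq : etaR qv qv = 1 := by
      rw [hqv, etaR_smul_left, etaR_smul_right, hApAp]
      field_simp
      linarith [hb0sq]
    have hpAp : etaR p (A *ᵥ p) = 0 := by
      rw [etaR_symm]; exact skew_self hF p
    have hpq : etaR p qv = 0 := by
      rw [hqv, etaR_smul_right, hpAp]; ring
    have hqp : etaR qv p = 0 := by rw [etaR_symm]; exact hpq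
    have hAp : A *ᵥ p = (-(b0)) • qv := by
      rw [hqv, smul_smul]
      have h1 : -b0 * -b0⁻¹ = 1 := by field_simp
      rw [h1, one_smul]
    -- the orthogonal complement of the plane (p, qv)
    set V1 := V ⊓ LinearMap.ker (phi p) with hV1
    set V2 := V1 ⊓ LinearMap.ker (phi qv) with hV2
    have hfr1 : Module.finrank ℝ ↥V1 + 1 = m := by
      rw [← hfr]
      exact finrank_inf_ker V (phi p) hpV (by rw [phi_apply, hpp]; norm_num)
    have hqV1 : qv ∈ V1 := by
      rw [hV1, Submodule.mem_inf]
      exact ⟨hqV, LinearMap.mem_ker.mpr (by rw [phi_apply]; exact hqp)⟩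
    have hfr2 : Module.finrank ℝ ↥V2 + 1 = Module.finrank ℝ ↥V1 := by
      exact finrank_inf_ker V1 (phi qv) hqV1 (by rw [phi_apply, hqq]; norm_num)
    have hm2 : 2 ≤ m := by omega
    have hmemV2 : ∀ x ∈ V2, x ∈ V ∧ etaR x p = 0 ∧ etaR x qv = 0 := by
      intro x hx
      obtain ⟨hx1, hx2⟩ := Submodule.mem_inf.mp hx
      obtain ⟨hx11, hx12⟩ := Submodule.mem_inf.mp hx1
      refine ⟨hx11, ?_, ?_⟩
      · have := LinearMap.mem_ker.mp hx12; rwa [phi_apply] at this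
      · have := LinearMap.mem_ker.mp hx2; rwa [phi_apply] at this
    have hmkV2 : ∀ x, x ∈ V → etaR x p = 0 → etaR x qv = 0 → x ∈ V2 := by
      intro x h1 h2 h3
      rw [hV2, Submodule.mem_inf, hV1, Submodule.mem_inf]
      exact ⟨⟨h1, LinearMap.mem_ker.mpr (by rw [phi_apply]; exact h2)⟩,
        LinearMap.mem_ker.mpr (by rw [phi_apply]; exact h3)⟩
    have hinv2 : ∀ x ∈ V2, A *ᵥ x ∈ V2 := by
      intro x hx
      obtain ⟨hxV, hxp, hxq⟩ := hmemV2 x hx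
      apply hmkV2
      · exact hinv x hxV
      · rw [skewA hF, hAp, etaR_smul_right, hxq]; ring
      · rw [skewA hF, hAq, etaR_smul_right, hxp]; ring
    have hpos2 : ∀ x, x ∈ V2 → x ≠ 0 → 0 < etaR x x := by
      intro x hx hx0
      exact hpos x (hmemV2 x hx).1 hx0
    obtain ⟨r', b', g', hr2', hsort', hbpos', hmem', horth', hrel1', hrel2', hz'⟩ :=
      IH (m-2) (by omega) V2 (by omega) hinv2 hpos2
    -- maximality transfer : every b' is at most b0
    have hble : ∀ i, i < r' → b' i ≤ b0 := by
      intro i hi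
      have h2i : 2*i < m - 2 := by omega
      have h2i1 : 2*i+1 < m - 2 := by omega
      have hgV : g' (2*i) ∈ V := (hmemV2 _ (hmem' (2*i) h2i)).1
      have hgunit : etaR (g' (2*i)) (g' (2*i)) = 1 := by
        rw [horth' (2*i) (2*i) h2i h2i, if_pos rfl]
      have hgunit1 : etaR (g' (2*i+1)) (g' (2*i+1)) = 1 := by
        rw [horth' (2*i+1) (2*i+1) h2i1 h2i1, if_pos rfl]
      have hrel := hrel1' i hi
      have hAg : etaR (A *ᵥ g' (2*i)) (A *ᵥ g' (2*i)) = (b' i)*(b' i) := by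
        rw [hA, hrel, etaR_smul_left, etaR_smul_right, hgunit1]
        ring
      have hb := hbound _ hgV
      rw [hAg, hgunit, mul_one] at hb
      have hbip : 0 < b' i := hbpos' i hi
      nlinarith [hb, hb0sq, hb0, hbip]
    set bb : ℕ → ℝ := fun i => if i = 0 then b0 else b' (i-1) with hbbdef
    have hbb0 : bb 0 = b0 := by simp [hbbdef]
    have hbbs : ∀ i, i ≠ 0 → bb i = b' (i-1) := fun i hi => by simp [hbbdef, hi]
    set g : ℕ → (Fin (n+1) → ℝ) :=
      fun k => if k = 0 then p else if k = 1 then qv else g' (k-2) with hgdef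
    have hg0 : g 0 = p := by simp [hgdef]
    have hg1 : g 1 = qv := by simp [hgdef]
    have hgs : ∀ k, k ≠ 0 → k ≠ 1 → g k = g' (k-2) := fun k hk0 hk1 => by
      simp [hgdef, hk0, hk1]
    have hgmem : ∀ k, k < m → g k ∈ V := by
      intro k hk
      by_cases hk0 : k = 0
      · rw [hk0, hg0]; exact hpV
      by_cases hk1 : k = 1
      · rw [hk1, hg1]; exact hqV
      · rw [hgs k hk0 hk1]
        exact (hmemV2 _ (hmem' (k-2) (by omega))).1
    have hperp : ∀ j, j ≠ 0 → j ≠ 1 → j < m → etaR (g j) p = 0 ∧ etaR (g j) qv = 0 := by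
      intro j hj0 hj1 hj
      rw [hgs j hj0 hj1]
      obtain ⟨_, h1, h2⟩ := hmemV2 _ (hmem' (j-2) (by omega))
      exact ⟨h1, h2⟩
    refine ⟨r'+1, bb, g, by omega, ?_, ?_, hgmem, ?_, ?_, ?_, ?_⟩
    · -- sorted
      intro i j hij hj
      by_cases hj0 : j = 0
      · have hi0 : i = 0 := by omega
        rw [hi0, hj0]
      · rw [hbbs j hj0]
        have hbj : b' (j-1) ≤ b0 := hble (j-1) (by omega)
        by_cases hi0 : i = 0
        · rw [hi0, hbb0]; exact hbj
        · rw [hbbs i hi0]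
          exact hsort' (i-1) (j-1) (by omega) (by omega)
    · -- positive
      intro i hi
      by_cases hi0 : i = 0
      · rw [hi0, hbb0]; exact hb0
      · rw [hbbs i hi0]; exact hbpos' (i-1) (by omega)
    · -- orthonormal
      intro k l hk hl
      by_cases hk0 : k = 0 <;> by_cases hl0 : l = 0
      · rw [hk0, hl0, hg0, hpp, if_pos rfl]
      · by_cases hl1 : l = 1
        · rw [hk0, hl1, hg0, hg1, hpq, if_neg (by omega : ¬(0:ℕ) = 1)]
        · rw [hk0, hg0, etaR_symm, (hperp l hl0 hl1 hl).1, if_neg (by omega : ¬(0:ℕ) = l)]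
      · by_cases hk1 : k = 1
        · rw [hk1, hl0, hg1, hg0, hqp, if_neg (by omega : ¬(1:ℕ) = 0)]
        · rw [hl0, hg0, (hperp k hk0 hk1 hk).1, if_neg (by omega : ¬k = 0)]
      · by_cases hk1 : k = 1 <;> by_cases hl1 : l = 1
        · rw [hk1, hl1, hg1, hqq, if_pos rfl]
        · rw [hk1, hg1, etaR_symm, (hperp l hl0 hl1 hl).2, if_neg (by omega : ¬(1:ℕ) = l)]
        · rw [hl1, hg1, (hperp k hk0 hk1 hk).2, if_neg (by omega : ¬k = 1)]
        · rw [hgs k hk0 hk1, hgs l hl0 hl1, horth' (k-2) (l-2) (by omega) (by omega)]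
          by_cases hkl : k = l
          · rw [if_pos (by omega : k - 2 = l - 2), if_pos hkl]
          · rw [if_neg (by omega : ¬k - 2 = l - 2), if_neg hkl]
    · -- first relation
      intro i hi
      by_cases hi0 : i = 0
      · rw [hi0]
        have e0 : 2*0 = 0 := by norm_num
        have e1 : 2*0+1 = 1 := by norm_num
        rw [e0, e1, hg0, hg1, hbb0, hAp]
      · have e1 : (2*i : ℕ) - 2 = 2*(i-1) := by omega
        have e2 : (2*i+1 : ℕ) - 2 = 2*(i-1)+1 := by omega
        rw [hgs (2*i) (by omega) (by omega), hgs (2*i+1) (by omega) (by omega),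
          hbbs i hi0, e1, e2]
        exact hrel1' (i-1) (by omega)
    · -- second relation
      intro i hi
      by_cases hi0 : i = 0
      · rw [hi0]
        have e0 : 2*0 = 0 := by norm_num
        have e1 : 2*0+1 = 1 := by norm_num
        rw [e0, e1, hg0, hg1, hbb0, hAq]
      · have e1 : (2*i : ℕ) - 2 = 2*(i-1) := by omega
        have e2 : (2*i+1 : ℕ) - 2 = 2*(i-1)+1 := by omega
        rw [hgs (2*i) (by omega) (by omega), hgs (2*i+1) (by omega) (by omega),
          hbbs i hi0, e1, e2]
        exact hrel2' (i-1) (by omega)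
    · -- kernel part
      intro k hrk hk
      rw [hgs k (by omega) (by omega)]
      exact hz' (k-2) (by omega) (by omega)

lemma conj_apply (P M : Matrix (Fin (n+1)) (Fin (n+1)) ℝ) (i j : Fin (n+1)) :
    (Pᵀ * M * P) i j = (fun k => P k i) ⬝ᵥ (M *ᵥ (fun k => P k j)) := by
  simp only [Matrix.mul_apply, Matrix.transpose_apply, dotProduct, Matrix.mulVec,
    Finset.sum_mul, Finset.mul_sum]
  rw [Finset.sum_comm]
  exact Finset.sum_congr rfl fun l _ => Finset.sum_congr rfl fun k _ => by ring

lemma dx_apply (μ ν : ℕ) (i j : Fin (n+1)) :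
    dx n μ ν i j = if (i : ℕ) = μ ∧ (j : ℕ) = ν then 1
      else if (i : ℕ) = ν ∧ (j : ℕ) = μ then -1 else 0 := by
  unfold dx
  rfl
end Aux

open Aux

/-- If the real kernel of `♯F` is a null subspace, then `F` is Lorentz-equivalent
to `dx⁰dx¹ + dx¹dx² + Σ_{i=1}^r b_i·dx^{2i+1}dx^{2i+2}`. -/
theorem canonical_form_null_kernel (n : ℕ) (hn : 2 ≤ n)
    (F : Matrix (Fin (n+1)) (Fin (n+1)) ℝ) (hF : Fᵀ = -F)
    (hpsd : ∀ v : Fin (n+1) → ℝ, ((eta n)⁻¹ * F).mulVec v = 0 → 0 ≤ etaR v v)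
    (hnull : ∃ l : Fin (n+1) → ℝ, ((eta n)⁻¹ * F).mulVec l = 0 ∧ l ≠ 0 ∧
      etaR l l = 0) :
    ∃ (Λ : Matrix (Fin (n+1)) (Fin (n+1)) ℝ), Λᵀ * eta n * Λ = eta n ∧
    ∃ (r : ℕ) (hr : 2 * r + 2 ≤ n) (b : Fin r → ℝ), DecreasingPos b ∧
      Λᵀ * F * Λ =
        dx n 0 1 + dx n 1 2 +
          ∑ i : Fin r, b i • dx n (2 * (i : ℕ) + 3) (2 * (i : ℕ) + 4) := by
  rw [eta_inv] at hpsd hnull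
  obtain ⟨l, hl, hl0, hll⟩ := hnull
  obtain ⟨L, W, U, hAL, hAW, hAU, hLL, hWW, hUU, hLW, hUW, hUL, hperpnn, hperpnull⟩ :=
    chain hF hpsd l hl hl0 hll
  have hWL : etaR W L = 0 := by rw [etaR_symm]; exact hLW
  have hWU : etaR W U = 0 := by rw [etaR_symm]; exact hUW
  have hLU : etaR L U = -1 := by rw [etaR_symm]; exact hUL
  set v0 : Fin (n+1) → ℝ := U + (2⁻¹ : ℝ) • L with hv0d
  set v1 : Fin (n+1) → ℝ := -W with hv1d
  set v2 : Fin (n+1) → ℝ := (2⁻¹ : ℝ) • L - U with hv2d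
  -- Gram facts for v0 v1 v2
  have g00 : etaR v0 v0 = -1 := by
    rw [hv0d]
    simp only [etaR_add_left, etaR_add_right, etaR_smul_left, etaR_smul_right]
    rw [hUU, hUL, hLU, hLL]; ring
  have g01 : etaR v0 v1 = 0 := by
    rw [hv0d, hv1d]
    simp only [etaR_add_left, etaR_neg_right, etaR_smul_left]
    rw [hUW, hLW]; ring
  have g02 : etaR v0 v2 = 0 := by
    rw [hv0d, hv2d]
    simp only [etaR_add_left, etaR_sub_right, etaR_smul_left, etaR_smul_right]
    rw [hUU, hUL, hLU, hLL]; ring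
  have g11 : etaR v1 v1 = 1 := by
    rw [hv1d]
    simp only [etaR_neg_left, etaR_neg_right]
    rw [hWW]; ring
  have g12 : etaR v1 v2 = 0 := by
    rw [hv1d, hv2d]
    simp only [etaR_neg_left, etaR_sub_right, etaR_smul_right]
    rw [hWL, hWU]; ring
  have g22 : etaR v2 v2 = 1 := by
    rw [hv2d]
    simp only [etaR_sub_left, etaR_sub_right, etaR_smul_left, etaR_smul_right]
    rw [hUU, hUL, hLU, hLL]; ring
  have g10 : etaR v1 v0 = 0 := by rw [etaR_symm]; exact g01
  have g20 : etaR v2 v0 = 0 := by rw [etaR_symm]; exact g02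
  have g21 : etaR v2 v1 = 0 := by rw [etaR_symm]; exact g12
  -- values against W and L
  have eW0 : etaR v0 W = 0 := by
    rw [hv0d]; simp only [etaR_add_left, etaR_smul_left]; rw [hUW, hLW]; ring
  have eW1 : etaR v1 W = -1 := by
    rw [hv1d]; simp only [etaR_neg_left]; rw [hWW]
  have eW2 : etaR v2 W = 0 := by
    rw [hv2d]; simp only [etaR_sub_left, etaR_smul_left]; rw [hUW, hLW]; ring
  have eL0 : etaR v0 L = -1 := by
    rw [hv0d]; simp only [etaR_add_left, etaR_smul_left]; rw [hUL, hLL]; ring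
  have eL1 : etaR v1 L = 0 := by
    rw [hv1d]; simp only [etaR_neg_left]; rw [hWL]; ring
  have eL2 : etaR v2 L = 1 := by
    rw [hv2d]; simp only [etaR_sub_left, etaR_smul_left]; rw [hUL, hLL]; ring
  -- mulVec images
  have hAv0 : (eta n * F) *ᵥ v0 = W := by
    rw [hv0d, Matrix.mulVec_add, Matrix.mulVec_smul, hAU, hAL]; simp
  have hAv1 : (eta n * F) *ᵥ v1 = -L := by
    rw [hv1d, Matrix.mulVec_neg, hAW]
  have hAv2 : (eta n * F) *ᵥ v2 = -W := by
    rw [hv2d, Matrix.mulVec_sub, Matrix.mulVec_smul, hAU, hAL]; simp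
  -- the orthogonal complement V3
  set V1 : Submodule ℝ (Fin (n+1) → ℝ) := ⊤ ⊓ LinearMap.ker (phi U) with hV1
  set V2 : Submodule ℝ (Fin (n+1) → ℝ) := V1 ⊓ LinearMap.ker (phi W) with hV2
  set V3 : Submodule ℝ (Fin (n+1) → ℝ) := V2 ⊓ LinearMap.ker (phi L) with hV3
  have hmemV3 : ∀ x, x ∈ V3 ↔ (etaR x U = 0 ∧ etaR x W = 0 ∧ etaR x L = 0) := by
    intro x
    rw [hV3, Submodule.mem_inf, hV2, Submodule.mem_inf, hV1, Submodule.mem_inf]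
    constructor
    · rintro ⟨⟨⟨-, h1⟩, h2⟩, h3⟩
      exact ⟨by have := LinearMap.mem_ker.mp h1; rwa [phi_apply] at this,
        by have := LinearMap.mem_ker.mp h2; rwa [phi_apply] at this,
        by have := LinearMap.mem_ker.mp h3; rwa [phi_apply] at this⟩
    · rintro ⟨h1, h2, h3⟩
      exact ⟨⟨⟨Submodule.mem_top, LinearMap.mem_ker.mpr (by rw [phi_apply]; exact h1)⟩,
        LinearMap.mem_ker.mpr (by rw [phi_apply]; exact h2)⟩,
        LinearMap.mem_ker.mpr (by rw [phi_apply]; exact h3)⟩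
  have hfr1 : Module.finrank ℝ ↥V1 + 1 = n + 1 := by
    rw [hV1]
    have h := finrank_inf_ker (⊤ : Submodule ℝ (Fin (n+1) → ℝ)) (phi U)
      (Submodule.mem_top (x := L)) (by rw [phi_apply, hLU]; norm_num)
    rw [h, finrank_top, Module.finrank_fintype_fun_eq_card, Fintype.card_fin]
  have hWV1 : W ∈ V1 := by
    rw [hV1, Submodule.mem_inf]
    exact ⟨Submodule.mem_top, LinearMap.mem_ker.mpr (by rw [phi_apply]; exact hWU)⟩
  have hfr2 : Module.finrank ℝ ↥V2 + 1 = Module.finrank ℝ ↥V1 := by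
    rw [hV2]
    exact finrank_inf_ker V1 (phi W) hWV1 (by rw [phi_apply, hWW]; norm_num)
  have hUV2 : U ∈ V2 := by
    rw [hV2, Submodule.mem_inf, hV1, Submodule.mem_inf]
    exact ⟨⟨Submodule.mem_top, LinearMap.mem_ker.mpr (by rw [phi_apply]; exact hUU)⟩,
      LinearMap.mem_ker.mpr (by rw [phi_apply]; exact hUW)⟩
  have hfr3 : Module.finrank ℝ ↥V3 + 1 = Module.finrank ℝ ↥V2 := by
    rw [hV3]
    exact finrank_inf_ker V2 (phi L) hUV2 (by rw [phi_apply, hUL]; norm_num)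
  have hfrV3 : Module.finrank ℝ ↥V3 = n - 2 := by omega
  have hinvV3 : ∀ x ∈ V3, (eta n * F) *ᵥ x ∈ V3 := by
    intro x hx
    obtain ⟨h1, h2, h3⟩ := (hmemV3 x).mp hx
    rw [hmemV3]
    refine ⟨?_, ?_, ?_⟩
    · rw [skewA hF, hAU, h2]; ring
    · rw [skewA hF, hAW, h3]; ring
    · rw [skewA hF, hAL, etaR_zero_right]; ring
  have hposV3 : ∀ x, x ∈ V3 → x ≠ 0 → 0 < etaR x x := by
    intro x hx hx0
    obtain ⟨h1, h2, h3⟩ := (hmemV3 x).mp hx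
    rcases lt_or_eq_of_le (hperpnn x h3) with h | h
    · exact h
    · exfalso
      obtain ⟨c, hc⟩ := hperpnull x h3 h.symm
      rw [hc, etaR_smul_left, hLU] at h1
      have hc0 : c = 0 := by linarith
      rw [hc0, zero_smul] at hc
      exact hx0 hc
  obtain ⟨r, bb, g, hr2, hsort, hbpos, hgmem, hgorth, hgrel1, hgrel2, hgz⟩ :=
    euc hF (n-2) V3 hfrV3 hinvV3 hposV3
  -- perpendicularity of the g family to v0 v1 v2
  have hgperp : ∀ k, k < n - 2 →
      etaR (g k) v0 = 0 ∧ etaR (g k) v1 = 0 ∧ etaR (g k) v2 = 0 ∧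
      etaR (g k) W = 0 ∧ etaR (g k) L = 0 := by
    intro k hk
    obtain ⟨h1, h2, h3⟩ := (hmemV3 _).mp (hgmem k hk)
    refine ⟨?_, ?_, ?_, h2, h3⟩
    · rw [hv0d, etaR_add_right, etaR_smul_right, h1, h3]; ring
    · rw [hv1d, etaR_neg_right, h2]; ring
    · rw [hv2d, etaR_sub_right, etaR_smul_right, h1, h3]; ring
  -- full family
  set v : Fin (n+1) → (Fin (n+1) → ℝ) := fun j =>
    if (j:ℕ) = 0 then v0 else if (j:ℕ) = 1 then v1 else if (j:ℕ) = 2 then v2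
    else g ((j:ℕ) - 3) with hvdef
  have hv0e : ∀ j : Fin (n+1), (j:ℕ) = 0 → v j = v0 := by
    intro j hj; simp only [hvdef, if_pos hj]
  have hv1e : ∀ j : Fin (n+1), (j:ℕ) = 1 → v j = v1 := by
    intro j hj; simp only [hvdef, if_neg (by omega : ¬(j:ℕ) = 0), if_pos hj]
  have hv2e : ∀ j : Fin (n+1), (j:ℕ) = 2 → v j = v2 := by
    intro j hj; simp only [hvdef, if_neg (by omega : ¬(j:ℕ) = 0), if_neg (by omega : ¬(j:ℕ) = 1), if_pos hj]
  have hvge : ∀ j : Fin (n+1), 3 ≤ (j:ℕ) → v j = g ((j:ℕ) - 3) := by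
    intro j hj
    simp only [hvdef, if_neg (by omega : ¬(j:ℕ) = 0), if_neg (by omega : ¬(j:ℕ) = 1),
      if_neg (by omega : ¬(j:ℕ) = 2)]
  set Λ : Matrix (Fin (n+1)) (Fin (n+1)) ℝ := Matrix.of (fun i j : Fin (n+1) => v j i)
    with hΛ
  have hcol : ∀ i, (fun k => Λ k i) = v i := fun i => rfl
  -- the Gram identity
  have hGram : ∀ i j : Fin (n+1), etaR (v i) (v j) = eta n i j := by
    intro i j
    have hi' := i.isLt
    have hj' := j.isLt
    have hetaij : eta n i j = if i = j then (if (i:ℕ) = 0 then (-1:ℝ) else 1) else 0 := by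
      rw [eta, Matrix.diagonal_apply]
    rw [hetaij]
    rcases (by omega : (i:ℕ) = 0 ∨ (i:ℕ) = 1 ∨ (i:ℕ) = 2 ∨ 3 ≤ (i:ℕ)) with hi | hi | hi | hi
      <;> rcases (by omega : (j:ℕ) = 0 ∨ (j:ℕ) = 1 ∨ (j:ℕ) = 2 ∨ 3 ≤ (j:ℕ))
        with hj | hj | hj | hj
    · rw [hv0e i hi, hv0e j hj, g00, if_pos (Fin.ext (by omega)), if_pos hi]
    · rw [hv0e i hi, hv1e j hj, g01, if_neg (by intro h; rw [h] at hi; omega)]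
    · rw [hv0e i hi, hv2e j hj, g02, if_neg (by intro h; rw [h] at hi; omega)]
    · rw [hv0e i hi, hvge j hj, etaR_symm, (hgperp _ (by omega)).1,
        if_neg (by intro h; rw [h] at hi; omega)]
    · rw [hv1e i hi, hv0e j hj, g10, if_neg (by intro h; rw [h] at hi; omega)]
    · rw [hv1e i hi, hv1e j hj, g11, if_pos (Fin.ext (by omega)), if_neg (by omega)]
    · rw [hv1e i hi, hv2e j hj, g12, if_neg (by intro h; rw [h] at hi; omega)]
    · rw [hv1e i hi, hvge j hj, etaR_symm, (hgperp _ (by omega)).2.1,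
        if_neg (by intro h; rw [h] at hi; omega)]
    · rw [hv2e i hi, hv0e j hj, g20, if_neg (by intro h; rw [h] at hi; omega)]
    · rw [hv2e i hi, hv1e j hj, g21, if_neg (by intro h; rw [h] at hi; omega)]
    · rw [hv2e i hi, hv2e j hj, g22, if_pos (Fin.ext (by omega)), if_neg (by omega)]
    · rw [hv2e i hi, hvge j hj, etaR_symm, (hgperp _ (by omega)).2.2.1,
        if_neg (by intro h; rw [h] at hi; omega)]
    · rw [hvge i hi, hv0e j hj, (hgperp _ (by omega)).1,
        if_neg (by intro h; rw [h] at hi; omega)]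
    · rw [hvge i hi, hv1e j hj, (hgperp _ (by omega)).2.1,
        if_neg (by intro h; rw [h] at hi; omega)]
    · rw [hvge i hi, hv2e j hj, (hgperp _ (by omega)).2.2.1,
        if_neg (by intro h; rw [h] at hi; omega)]
    · rw [hvge i hi, hvge j hj, hgorth ((i:ℕ)-3) ((j:ℕ)-3) (by omega) (by omega)]
      by_cases hij : (i:ℕ) = (j:ℕ)
      · rw [if_pos (by omega), if_pos (Fin.ext hij), if_neg (by omega)]
      · rw [if_neg (by omega), if_neg (by intro h; rw [h] at hij; exact hij rfl)]
  -- value tables for the canonical-form computation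
  have hEW : ∀ i : Fin (n+1), etaR (v i) W = if (i:ℕ) = 1 then -1 else 0 := by
    intro i
    have hi' := i.isLt
    rcases (by omega : (i:ℕ) = 0 ∨ (i:ℕ) = 1 ∨ (i:ℕ) = 2 ∨ 3 ≤ (i:ℕ)) with hi | hi | hi | hi
    · rw [hv0e i hi, eW0, if_neg (by omega)]
    · rw [hv1e i hi, eW1, if_pos hi]
    · rw [hv2e i hi, eW2, if_neg (by omega)]
    · rw [hvge i hi, (hgperp _ (by omega)).2.2.2.1, if_neg (by omega)]
  have hEL : ∀ i : Fin (n+1),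
      etaR (v i) L = if (i:ℕ) = 0 then -1 else if (i:ℕ) = 2 then 1 else 0 := by
    intro i
    have hi' := i.isLt
    rcases (by omega : (i:ℕ) = 0 ∨ (i:ℕ) = 1 ∨ (i:ℕ) = 2 ∨ 3 ≤ (i:ℕ)) with hi | hi | hi | hi
    · rw [hv0e i hi, eL0, if_pos hi]
    · rw [hv1e i hi, eL1, if_neg (by omega), if_neg (by omega)]
    · rw [hv2e i hi, eL2, if_neg (by omega), if_pos hi]
    · rw [hvge i hi, (hgperp _ (by omega)).2.2.2.2, if_neg (by omega), if_neg (by omega)]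
  have hEg : ∀ (i : Fin (n+1)) (d : ℕ), d < n - 2 →
      etaR (v i) (g d) = if (i:ℕ) = d + 3 then 1 else 0 := by
    intro i d hd
    have hi' := i.isLt
    rcases (by omega : (i:ℕ) = 0 ∨ (i:ℕ) = 1 ∨ (i:ℕ) = 2 ∨ 3 ≤ (i:ℕ)) with hi | hi | hi | hi
    · rw [hv0e i hi, etaR_symm, (hgperp _ hd).1, if_neg (by omega)]
    · rw [hv1e i hi, etaR_symm, (hgperp _ hd).2.1, if_neg (by omega)]
    · rw [hv2e i hi, etaR_symm, (hgperp _ hd).2.2.1, if_neg (by omega)]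
    · rw [hvge i hi, hgorth ((i:ℕ)-3) d (by omega) hd]
      by_cases hid : (i:ℕ) = d + 3
      · rw [if_pos (by omega), if_pos hid]
      · rw [if_neg (by omega), if_neg hid]
  -- evaluation of the right-hand side
  have hRHS : ∀ i j : Fin (n+1),
      (dx n 0 1 + dx n 1 2 + ∑ k : Fin r, bb (k:ℕ) • dx n (2*(k:ℕ)+3) (2*(k:ℕ)+4)) i j
      = (if (i:ℕ) = 0 ∧ (j:ℕ) = 1 then 1 else if (i:ℕ) = 1 ∧ (j:ℕ) = 0 then -1 else 0)
      + (if (i:ℕ) = 1 ∧ (j:ℕ) = 2 then 1 else if (i:ℕ) = 2 ∧ (j:ℕ) = 1 then -1 else 0)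
      + (∑ k : Fin r, bb (k:ℕ) *
          (if (i:ℕ) = 2*(k:ℕ)+3 ∧ (j:ℕ) = 2*(k:ℕ)+4 then 1
           else if (i:ℕ) = 2*(k:ℕ)+4 ∧ (j:ℕ) = 2*(k:ℕ)+3 then -1 else 0)) := by
    intro i j
    simp only [Matrix.add_apply, Matrix.sum_apply, Matrix.smul_apply, dx_apply, smul_eq_mul]
  have hsz : ∀ i j : Fin (n+1),
      (∀ k : Fin r, ¬((i:ℕ) = 2*(k:ℕ)+3 ∧ (j:ℕ) = 2*(k:ℕ)+4) ∧
        ¬((i:ℕ) = 2*(k:ℕ)+4 ∧ (j:ℕ) = 2*(k:ℕ)+3)) →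
      (∑ k : Fin r, bb (k:ℕ) *
          (if (i:ℕ) = 2*(k:ℕ)+3 ∧ (j:ℕ) = 2*(k:ℕ)+4 then 1
           else if (i:ℕ) = 2*(k:ℕ)+4 ∧ (j:ℕ) = 2*(k:ℕ)+3 then -1 else 0)) = 0 := by
    intro i j h
    apply Finset.sum_eq_zero
    intro k _
    rw [if_neg (h k).1, if_neg (h k).2, mul_zero]
  have hspos : ∀ (i j : Fin (n+1)) (k0 : Fin r),
      (i:ℕ) = 2*(k0:ℕ)+3 → (j:ℕ) = 2*(k0:ℕ)+4 →
      (∑ k : Fin r, bb (k:ℕ) *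
          (if (i:ℕ) = 2*(k:ℕ)+3 ∧ (j:ℕ) = 2*(k:ℕ)+4 then 1
           else if (i:ℕ) = 2*(k:ℕ)+4 ∧ (j:ℕ) = 2*(k:ℕ)+3 then -1 else 0)) = bb (k0:ℕ) := by
    intro i j k0 hi hj
    rw [Finset.sum_eq_single k0]
    · rw [if_pos ⟨hi, hj⟩, mul_one]
    · intro k _ hk
      have hk' : (k:ℕ) ≠ (k0:ℕ) := fun h => hk (Fin.ext h)
      rw [if_neg (by omega), if_neg (by omega), mul_zero]
    · intro h; exact absurd (Finset.mem_univ k0) h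
  have hsneg : ∀ (i j : Fin (n+1)) (k0 : Fin r),
      (i:ℕ) = 2*(k0:ℕ)+4 → (j:ℕ) = 2*(k0:ℕ)+3 →
      (∑ k : Fin r, bb (k:ℕ) *
          (if (i:ℕ) = 2*(k:ℕ)+3 ∧ (j:ℕ) = 2*(k:ℕ)+4 then 1
           else if (i:ℕ) = 2*(k:ℕ)+4 ∧ (j:ℕ) = 2*(k:ℕ)+3 then -1 else 0)) = -(bb (k0:ℕ)) := by
    intro i j k0 hi hj
    rw [Finset.sum_eq_single k0]
    · rw [if_neg (by omega), if_pos ⟨hi, hj⟩]; ring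
    · intro k _ hk
      have hk' : (k:ℕ) ≠ (k0:ℕ) := fun h => hk (Fin.ext h)
      rw [if_neg (by omega), if_neg (by omega), mul_zero]
    · intro h; exact absurd (Finset.mem_univ k0) h
  refine ⟨Λ, ?_, r, by omega, fun k => bb (k:ℕ), ⟨?_, ?_⟩, ?_⟩
  · -- Lorentz condition
    ext i j
    rw [conj_apply, hcol, hcol, ← etaR_eq]
    exact hGram i j
  · intro i j hij
    exact hsort (i:ℕ) (j:ℕ) hij j.isLt
  · intro i
    exact hbpos (i:ℕ) i.isLt
  · -- canonical form
    ext i j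
    have hentry : (Λᵀ * F * Λ) i j = etaR (v i) ((eta n * F) *ᵥ (v j)) := by
      rw [conj_apply, hcol, hcol, etaR_eq]
      congr 1
      rw [Matrix.mulVec_mulVec, ← Matrix.mul_assoc, eta_sq, Matrix.one_mul]
    rw [hentry, hRHS i j]
    have hi' := i.isLt
    have hj' := j.isLt
    rcases (by omega : (j:ℕ) = 0 ∨ (j:ℕ) = 1 ∨ (j:ℕ) = 2 ∨ 3 ≤ (j:ℕ)) with hj | hj | hj | hj
    · -- column 0
      rw [hv0e j hj, hAv0, hEW i, hsz i j (fun k => ⟨by omega, by omega⟩),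
        if_neg (by omega : ¬((i:ℕ) = 0 ∧ (j:ℕ) = 1)),
        if_neg (by omega : ¬((i:ℕ) = 1 ∧ (j:ℕ) = 2)),
        if_neg (by omega : ¬((i:ℕ) = 2 ∧ (j:ℕ) = 1))]
      by_cases hi1 : (i:ℕ) = 1
      · rw [if_pos hi1, if_pos (⟨hi1, hj⟩ : (i:ℕ) = 1 ∧ (j:ℕ) = 0)]; ring
      · rw [if_neg hi1, if_neg (by omega : ¬((i:ℕ) = 1 ∧ (j:ℕ) = 0))]; ring
    · -- column 1
      rw [hv1e j hj, hAv1, etaR_neg_right, hEL i, hsz i j (fun k => ⟨by omega, by omega⟩),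
        if_neg (by omega : ¬((i:ℕ) = 1 ∧ (j:ℕ) = 0)),
        if_neg (by omega : ¬((i:ℕ) = 1 ∧ (j:ℕ) = 2))]
      by_cases hi0 : (i:ℕ) = 0
      · rw [if_pos hi0, if_pos (⟨hi0, hj⟩ : (i:ℕ) = 0 ∧ (j:ℕ) = 1),
          if_neg (by omega : ¬((i:ℕ) = 2 ∧ (j:ℕ) = 1))]; ring
      · rw [if_neg hi0, if_neg (by omega : ¬((i:ℕ) = 0 ∧ (j:ℕ) = 1))]
        by_cases hi2 : (i:ℕ) = 2
        · rw [if_pos hi2, if_pos (⟨hi2, hj⟩ : (i:ℕ) = 2 ∧ (j:ℕ) = 1)]; ring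
        · rw [if_neg hi2, if_neg (by omega : ¬((i:ℕ) = 2 ∧ (j:ℕ) = 1))]; ring
    · -- column 2
      rw [hv2e j hj, hAv2, etaR_neg_right, hEW i, hsz i j (fun k => ⟨by omega, by omega⟩),
        if_neg (by omega : ¬((i:ℕ) = 0 ∧ (j:ℕ) = 1)),
        if_neg (by omega : ¬((i:ℕ) = 1 ∧ (j:ℕ) = 0)),
        if_neg (by omega : ¬((i:ℕ) = 2 ∧ (j:ℕ) = 1))]
      by_cases hi1 : (i:ℕ) = 1
      · rw [if_pos hi1, if_pos (⟨hi1, hj⟩ : (i:ℕ) = 1 ∧ (j:ℕ) = 2)]; ring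
      · rw [if_neg hi1, if_neg (by omega : ¬((i:ℕ) = 1 ∧ (j:ℕ) = 2))]; ring
    · -- columns ≥ 3
      rw [hvge j hj,
        if_neg (by omega : ¬((i:ℕ) = 0 ∧ (j:ℕ) = 1)),
        if_neg (by omega : ¬((i:ℕ) = 1 ∧ (j:ℕ) = 0)),
        if_neg (by omega : ¬((i:ℕ) = 1 ∧ (j:ℕ) = 2)),
        if_neg (by omega : ¬((i:ℕ) = 2 ∧ (j:ℕ) = 1))]
      set d := (j:ℕ) - 3 with hd
      rcases (by omega : d < 2*r ∨ 2*r ≤ d) with hdr | hdr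
      · rcases Nat.even_or_odd d with ⟨id, hid⟩ | ⟨id, hid⟩
        · -- even : first element of a rotation pair
          have hidr : id < r := by omega
          have hde : d = 2*id := by omega
          rw [hde, hgrel1 id hidr, etaR_smul_right, hEg i (2*id+1) (by omega)]
          set k0 : Fin r := ⟨id, hidr⟩ with hk0
          have hk0v : (k0:ℕ) = id := rfl
          by_cases hieq : (i:ℕ) = 2*id+4
          · rw [if_pos (by omega : (i:ℕ) = 2*id+1+3), hsneg i j k0 (by omega) (by omega), hk0v]
            ring
          · rw [if_neg (by omega : ¬((i:ℕ) = 2*id+1+3)), hsz i j (fun k => ⟨by omega, by omega⟩)]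
            ring
        · -- odd : second element of a rotation pair
          have hidr : id < r := by omega
          have hde : d = 2*id+1 := by omega
          rw [hde, hgrel2 id hidr, etaR_smul_right, hEg i (2*id) (by omega)]
          set k0 : Fin r := ⟨id, hidr⟩ with hk0
          have hk0v : (k0:ℕ) = id := rfl
          by_cases hieq : (i:ℕ) = 2*id+3
          · rw [if_pos (by omega : (i:ℕ) = 2*id+3), hspos i j k0 (by omega) (by omega), hk0v]
            ring
          · rw [if_neg (by omega : ¬((i:ℕ) = 2*id+3)), hsz i j (fun k => ⟨by omega, by omega⟩)]
            ring
      · -- kernel columns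
        rw [hgz d hdr (by omega), etaR_zero_right,
          hsz i j (fun k => ⟨by omega, by omega⟩)]
        ring
end
end

section
/- Let F and G be constant 2-forms on ℝ^{n,1} satisfying the commutation relation [♯F, ♯G] = ♯F (where [·,·] is the matrix commutator), and suppose F is superdiagonal, i.e. F = Σ_{k=0}^{n−1} u_k · dx^k dx^{k+1} for real numbers u₀,…,u_{n−1}. Then the superdiagonal array of F has no isolated nonzero element: for every k with u_k ≠ 0, either k ≥ 1 and u_{k−1} ≠ 0, or k ≤ n−2 and u_{k+1} ≠ 0. -/
open Matrix BigOperators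

noncomputable section

/-- The operator `♯F = η⁻¹ F` as a real matrix. -/
def sharpR {n : ℕ} (F : Matrix (Fin (n+1)) (Fin (n+1)) ℝ) :
    Matrix (Fin (n+1)) (Fin (n+1)) ℝ :=
  (eta n)⁻¹ * F

lemma eta_inv (n : ℕ) : (eta n)⁻¹ = eta n := by
  apply Matrix.inv_eq_right_inv
  unfold eta
  rw [Matrix.diagonal_mul_diagonal]
  ext i j
  simp only [Matrix.diagonal_apply, Matrix.one_apply]
  split_ifs <;> norm_num

/-- If `[♯F, ♯G] = ♯F` and `F` is superdiagonal with array `u`, then `u` has no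
isolated nonzero element. -/
theorem no_isolated_nonzero_element (n : ℕ)
    (F G : Matrix (Fin (n+1)) (Fin (n+1)) ℝ)
    (hF : Fᵀ = -F) (hG : Gᵀ = -G)
    (hcomm : sharpR F * sharpR G - sharpR G * sharpR F = sharpR F)
    (u : Fin n → ℝ)
    (hFu : F = ∑ k : Fin n, u k • dx n (k : ℕ) ((k : ℕ) + 1)) :
    ∀ k : Fin n, u k ≠ 0 →
      (∃ j : Fin n, (j : ℕ) + 1 = (k : ℕ) ∧ u j ≠ 0) ∨
      (∃ j : Fin n, (k : ℕ) + 1 = (j : ℕ) ∧ u j ≠ 0) := by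
  intro k hk
  by_contra hcon
  push_neg at hcon
  obtain ⟨hleft, hright⟩ := hcon
  -- entries of F
  have hFe : ∀ i j : Fin (n+1), F i j =
      ∑ m : Fin n, u m * (if (i:ℕ) = (m:ℕ) ∧ (j:ℕ) = (m:ℕ)+1 then 1
        else if (i:ℕ) = (m:ℕ)+1 ∧ (j:ℕ) = (m:ℕ) then -1 else 0) := by
    intro i j
    rw [hFu]
    simp [Matrix.sum_apply, dx]
  -- column k of F
  have hcol : ∀ i : Fin (n+1), F i k.castSucc =
      if (i:ℕ) = (k:ℕ)+1 then -u k else 0 := by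
    intro i
    rw [hFe]
    rw [Finset.sum_eq_single k]
    · simp only [Fin.coe_castSucc]
      rw [if_neg (by omega : ¬((i:ℕ) = (k:ℕ) ∧ (k:ℕ) = (k:ℕ)+1))]
      by_cases h : (i:ℕ) = (k:ℕ)+1
      · rw [if_pos ⟨h, trivial⟩, if_pos h]; ring
      · rw [if_neg (fun hc => h hc.1), if_neg h]; ring
    · intro m _ hm
      simp only [Fin.coe_castSucc]
      split_ifs with h1 h2
      · rw [hleft m h1.2.symm]; ring
      · exact absurd (Fin.ext h2.2.symm) hm
      · ring
    · intro h; exact absurd (Finset.mem_univ k) h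
  -- row k+1 of F
  have hrow : ∀ l : Fin (n+1), F k.succ l =
      if (l:ℕ) = (k:ℕ) then -u k else 0 := by
    intro l
    rw [hFe]
    rw [Finset.sum_eq_single k]
    · simp only [Fin.val_succ]
      rw [if_neg (by omega : ¬((k:ℕ)+1 = (k:ℕ) ∧ (l:ℕ) = (k:ℕ)+1))]
      by_cases h : (l:ℕ) = (k:ℕ)
      · rw [if_pos ⟨trivial, h⟩, if_pos h]; ring
      · rw [if_neg (fun hc => h hc.2), if_neg h]; ring
    · intro m _ hm
      simp only [Fin.val_succ]
      split_ifs with h1 h2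
      · rw [hright m h1.1]; ring
      · exact absurd (Fin.ext (by omega : (m:ℕ) = (k:ℕ))) hm
      · ring
    · intro h; exact absurd (Finset.mem_univ k) h
  have hA : sharpR F = eta n * F := by rw [sharpR, eta_inv]
  -- entries of A = ♯F
  have hAcol : ∀ i : Fin (n+1), (sharpR F) i k.castSucc =
      if i = k.succ then -u k else 0 := by
    intro i
    rw [hA]
    unfold eta
    rw [Matrix.diagonal_mul, hcol i]
    by_cases h : (i:ℕ) = (k:ℕ)+1
    · have hi : i = k.succ := Fin.ext (by simpa using h)
      simp [h, hi]
    · have hi : i ≠ k.succ := fun he => h (by rw [he]; simp)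
      simp [h, hi]
  have hArow : ∀ l : Fin (n+1), (sharpR F) k.succ l =
      if l = k.castSucc then -u k else 0 := by
    intro l
    rw [hA]
    unfold eta
    rw [Matrix.diagonal_mul, hrow l]
    have h0 : ((k.succ : Fin (n+1)) : ℕ) ≠ 0 := by simp
    by_cases h : (l:ℕ) = (k:ℕ)
    · have hl : l = k.castSucc := Fin.ext (by simpa using h)
      simp [h, hl, h0]
    · have hl : l ≠ k.castSucc := fun he => h (by rw [he]; simp)
      simp [h, hl, h0]
  -- diagonal of B = ♯G vanishes
  have hBdiag : ∀ i : Fin (n+1), (sharpR G) i i = 0 := by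
    intro i
    rw [sharpR, eta_inv]
    unfold eta
    rw [Matrix.diagonal_mul]
    have hGii : G i i = 0 := by
      have h := congrFun (congrFun hG i) i
      simp only [Matrix.transpose_apply, Matrix.neg_apply] at h
      linarith
    simp [hGii]
  -- evaluate the commutator equation at entry (k+1, k)
  have h : (sharpR F * sharpR G - sharpR G * sharpR F) k.succ k.castSucc
      = sharpR F k.succ k.castSucc := by rw [hcomm]
  rw [Matrix.sub_apply, Matrix.mul_apply, Matrix.mul_apply] at h
  simp only [hArow, hAcol, ite_mul, mul_ite, zero_mul, mul_zero,
    Finset.sum_ite_eq', Finset.mem_univ, if_true, hBdiag] at h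
  simp at h
  exact hk h
end
end

section
/- Let ξ and η̃ be Killing vector fields on ℝ^{n,1}, given by ξ(x) = Ax + a and η̃(x) = Bx + b with A, B η-antisymmetric real (n+1)×(n+1) matrices (η(Mu, w) = −η(u, Mw)) and a, b ∈ ℝ^{n+1}, satisfying the Lie bracket relation [ξ, η̃] = ξ, i.e. (BA − AB)x + (Ba − Ab) = Ax + a for all x. Then the matrix A is nilpotent. -/
open Matrix BigOperators

noncomputable section

/-- If Killing vector fields `ξ(x) = Ax + a` and `η̃(x) = Bx + b` on `ℝ^{n,1}`
satisfy `[ξ, η̃] = ξ`, then `A` is nilpotent. -/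
theorem bracket_implies_nilpotent (n : ℕ)
    (A B : Matrix (Fin (n+1)) (Fin (n+1)) ℝ)
    (hA : ∀ u w : Fin (n+1) → ℝ, etaR (A.mulVec u) w = -(etaR u (A.mulVec w)))
    (hB : ∀ u w : Fin (n+1) → ℝ, etaR (B.mulVec u) w = -(etaR u (B.mulVec w)))
    (a b : Fin (n+1) → ℝ)
    (hbracket : ∀ x : Fin (n+1) → ℝ,
      (B * A - A * B).mulVec x + (B.mulVec a - A.mulVec b) = A.mulVec x + a) :
    IsNilpotent A := by
  -- Extract the matrix identity `B*A - A*B = A` from the bracket relation.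
  have h0 := hbracket 0
  simp only [Matrix.mulVec_zero, zero_add] at h0
  have hAB : B * A - A * B = A := by
    ext i j
    have hx := hbracket (Pi.single j 1)
    rw [h0] at hx
    have hx' := add_right_cancel hx
    have := congrFun hx' i
    simpa [Matrix.mulVec_single] using this
  by_contra hnil
  have hApow : ∀ k : ℕ, A ^ (k + 1) ≠ 0 := by
    intro k hk
    exact hnil ⟨k + 1, hk⟩
  -- key commutator formula
  have hpow : ∀ k : ℕ, B * A ^ (k+1) - A ^ (k+1) * B = ((k : ℝ) + 1) • A ^ (k+1) := by
    intro k
    induction k with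
    | zero => simpa using hAB
    | succ k ih =>
      have e1 : B * A ^ (k+2) - A ^ (k+2) * B
          = (B * A - A * B) * A ^ (k+1) + A * (B * A ^ (k+1) - A ^ (k+1) * B) := by
        have : A ^ (k+2) = A * A ^ (k+1) := by rw [pow_succ']
        rw [this]; noncomm_ring
      rw [e1, hAB, ih, Matrix.mul_smul, ← pow_succ']
      push_cast
      module
  -- the endomorphism `ad B` of the matrix space
  let f : Module.End ℝ (Matrix (Fin (n+1)) (Fin (n+1)) ℝ) :=
    LinearMap.mulLeft ℝ B - LinearMap.mulRight ℝ B
  have hev : ∀ k : ℕ, f.HasEigenvalue ((k : ℝ) + 1) := by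
    intro k
    apply Module.End.hasEigenvalue_of_hasEigenvector (x := A ^ (k+1))
    refine ⟨?_, hApow k⟩
    rw [Module.End.mem_eigenspace_iff]
    show B * A ^ (k+1) - A ^ (k+1) * B = _
    exact hpow k
  have hfin : Set.Finite f.HasEigenvalue := Module.End.finite_hasEigenvalue f
  have hinf : Set.Infinite (Set.range (fun k : ℕ => (k : ℝ) + 1)) := by
    apply Set.infinite_range_of_injective
    intro a b hab
    exact_mod_cast add_right_cancel hab
  exact hinf (hfin.subset (by rintro x ⟨k, rfl⟩; exact hev k))
end
end
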